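/- arXiv:0810.0196 — 5 statements merged into one kernel-verified Lean document; each statement's English description precedes it below -/
import Mathlib

section
/- For every integer D ≥ 12, the (D−11)×(D−11) real symmetric matrix M = (M_{ab}) indexed by integers a, b with 4 ≤ a, b ≤ D − 8 and entries M_{ab} = min(a,b) − 3 − (a−1)(b−1)/(D−2) is positive definite. -/
/-!
Write `L` for the upper triangular all-ones matrix and `c = (3, 1, …, 1)`. Then `Lᵀ L` has entries
`min(i, j) + 1` and `Lᵀ c` has entries `i + 3`, so with `a = i + 4` the matrix of the statement is
`Lᵀ (1 - c cᵀ / (D - 2)) L`. The middle factor is positive definite by Cauchy–Schwarz, because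
`|c|² = D - 3 < D - 2`, and `L` is invertible.
-/

open scoped BigOperators

open Matrix Finset

theorem Matrix.posDef_one_sub_smul_vecMulVec_self {n : Type*} [Fintype n] [DecidableEq n]
    {c : n → ℝ} {t : ℝ} (hc : c ⬝ᵥ c < t) : (1 - t⁻¹ • vecMulVec c c).PosDef := by
  have ht : 0 < t := (dotProduct_self_star_nonneg c).trans_lt hc
  have hcc : (vecMulVec c c).IsHermitian := by
    simpa using (posSemidef_vecMulVec_self_star c).isHermitian
  refine PosDef.of_dotProduct_mulVec_pos (isHermitian_one.sub (hcc.smul (.all _))) fun x hx => ?_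
  have hx : 0 < x ⬝ᵥ x := by simpa using dotProduct_star_self_pos_iff.mpr hx
  have cauchySchwarz : (c ⬝ᵥ x) ^ 2 ≤ (c ⬝ᵥ c) * (x ⬝ᵥ x) := by
    simpa only [dotProduct, sq] using sum_mul_sq_le_sq_mul_sq univ c x
  have : (c ⬝ᵥ x) ^ 2 < t * (x ⬝ᵥ x) :=
    cauchySchwarz.trans_lt (mul_lt_mul_of_pos_right hc hx)
  simp only [star_trivial, sub_mulVec, one_mulVec, smul_mulVec, vecMulVec_mulVec, op_smul_eq_mul,
    dotProduct_sub, dotProduct_smul, smul_eq_mul, dotProduct_comm x c]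
  rw [sub_pos, ← div_eq_inv_mul, div_lt_iff₀ ht]
  linarith

def Matrix.upperOnes (K : Type*) [Zero K] [One K] (n : ℕ) : Matrix (Fin n) (Fin n) K :=
  of fun k i => if k ≤ i then 1 else 0

namespace Matrix.upperOnes

variable {n : ℕ}

theorem det_eq_one {K : Type*} [CommRing K] : (upperOnes K n).det = 1 := by
  rw [det_of_isUpperTriangular]
  · simp [upperOnes]
  · exact fun i j hij => if_neg (not_le.mpr hij)

theorem mulVec_injective {K : Type*} [Field K] : Function.Injective (upperOnes K n).mulVec := by
  rw [mulVec_injective_iff_isUnit, isUnit_iff_isUnit_det, det_eq_one]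
  exact isUnit_one

theorem transpose_mulVec_apply {K : Type*} [Semiring K] (c : Fin n → K) (i : Fin n) :
    ((upperOnes K n)ᵀ *ᵥ c) i = ∑ k ∈ Iic i, c k := by
  simp [upperOnes, mulVec, dotProduct, ← sum_filter, filter_ge_eq_Iic]

theorem transpose_mul_self_apply {K : Type*} [Semiring K] (i j : Fin n) :
    ((upperOnes K n)ᵀ * upperOnes K n) i j = (min (i : ℕ) j : ℕ) + 1 := by
  simp only [upperOnes, mul_apply, transpose_apply, of_apply, mul_ite, mul_one, mul_zero,
    ← ite_and, ← le_min_iff, ← sum_filter, filter_ge_eq_Iic, sum_const, Fin.card_Iic, nsmul_one]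
  push_cast
  rw [min_comm]

end Matrix.upperOnes

theorem Matrix.posDef_min_add_one_sub_mul_partialSum {n : ℕ} (c : Fin n → ℝ) {t : ℝ}
    (hc : c ⬝ᵥ c < t) :
    (of fun i j : Fin n =>
      ((min (i : ℕ) j : ℕ) : ℝ) + 1 - (∑ k ∈ Iic i, c k) * (∑ k ∈ Iic j, c k) / t).PosDef := by
  have hfactor : (of fun i j : Fin n =>
      ((min (i : ℕ) j : ℕ) : ℝ) + 1 - (∑ k ∈ Iic i, c k) * (∑ k ∈ Iic j, c k) / t) =
      (upperOnes ℝ n)ᴴ * (1 - t⁻¹ • vecMulVec c c) * upperOnes ℝ n := by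
    rw [conjTranspose_eq_transpose_of_trivial, mul_sub, sub_mul, mul_one, Matrix.mul_smul,
      Matrix.smul_mul, mul_vecMulVec, vecMulVec_mul, ← mulVec_transpose]
    ext i j
    simp [upperOnes.transpose_mul_self_apply, upperOnes.transpose_mulVec_apply, vecMulVec_apply,
      div_eq_inv_mul]
  rw [hfactor]
  exact (posDef_one_sub_smul_vecMulVec_self hc).conjTranspose_mul_mul_same
    upperOnes.mulVec_injective

theorem Matrix.posDef_min_add_one_sub_mul_add_three {n : ℕ} {t : ℝ} (ht : (n : ℝ) + 9 < t) :
    (of fun i j : Fin (n + 1) =>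
      ((min (i : ℕ) j : ℕ) : ℝ) + 1 - ((i : ℝ) + 3) * ((j : ℝ) + 3) / t).PosDef := by
  set c : Fin (n + 1) → ℝ := 1 + Pi.single 0 2
  have hcc : c ⬝ᵥ c = n + 9 := by norm_num [c, add_assoc]
  have hsum (i : Fin (n + 1)) : ∑ k ∈ Iic i, c k = (i : ℝ) + 3 := by
    norm_num [c, sum_add_distrib, add_assoc]
  simpa only [hsum] using posDef_min_add_one_sub_mul_partialSum c (hcc.trans_lt ht)

/-- For `D ≥ 12`, the `(D−11)×(D−11)` Gram-type matrix with entries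
`M_{ab} = min(a,b) − 3 − (a−1)(b−1)/(D−2)`, indexed by `a, b ∈ {4, …, D−8}`,
is positive definite. -/
theorem stmt2 (D : ℕ) (hD : 12 ≤ D)
    (M : Matrix (Fin (D - 11)) (Fin (D - 11)) ℝ)
    (hM : ∀ i j : Fin (D - 11),
      M i j = ((min ((i : ℕ) + 4) ((j : ℕ) + 4) : ℕ) : ℝ) - 3
        - ((((i : ℕ) + 4 : ℕ) : ℝ) - 1) * ((((j : ℕ) + 4 : ℕ) : ℝ) - 1) / ((D : ℝ) - 2)) :
    M.PosDef := by
  obtain ⟨n, hn⟩ : ∃ n, D - 11 = n + 1 := ⟨D - 12, by omega⟩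
  have ht : (n : ℝ) + 9 < D - 2 := by
    have : (n : ℝ) + 12 = D := by exact_mod_cast (by omega : n + 12 = D)
    linarith
  generalize D - 11 = m at M hM hn
  subst hn
  convert posDef_min_add_one_sub_mul_add_three ht using 1
  ext i j
  rw [hM, of_apply, Nat.add_min_add_right]
  push_cast
  ring
end

section
/- Let n ≥ 2, let d_1, …, d_n be positive reals, set D = 1 + d_1 + ⋯ + d_n with D ≠ 2, and let G^{ij} = δ^{ij}/d_i + 1/(2 − D). For a subset I ⊆ {1,…,n} define the brane covector U ∈ ℝ^n by U_j = d_j·1_{j∈I}, the curvature covectors U^i by (U^i)_k = −δ^i_k + d_k, the cosmological covector U^Λ by (U^Λ)_k = d_k, and the scalar product (U,U') = Σ_{k,l} G^{kl} U_k U'_l. Then for all i: (U, U^i) = −1_{i∈I}, and (U, U^Λ) = d(I)/(2 − D), where d(I) = Σ_{i∈I} d_i. -/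
open scoped BigOperators

/-- Scalar products of a brane covector `U` (components `d_j·1_{j∈I}`) with the
curvature covectors `U^i` (components `−δ^i_k + d_k`) and the cosmological covector
`U^Λ` (components `d_k`) in the cosmological (`d_0 = 1`) sector:
`(U, U^i) = −1_{i∈I}` and `(U, U^Λ) = d(I)/(2 − D)`. -/
theorem stmt7 (n : ℕ) (hn : 2 ≤ n) (d : Fin n → ℝ) (hd : ∀ i, 0 < d i)
    (D : ℝ) (hD : D = 1 + ∑ i, d i) (hD2 : D ≠ 2)
    (I : Finset (Fin n))
    (U : Fin n → ℝ) (Uc : Fin n → Fin n → ℝ) (UΛ : Fin n → ℝ)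
    (hU : ∀ j, U j = if j ∈ I then d j else 0)
    (hUc : ∀ i k, Uc i k = -(if i = k then (1 : ℝ) else 0) + d k)
    (hUΛ : ∀ k, UΛ k = d k) :
    (∀ i : Fin n,
        (∑ k, ∑ m, ((if k = m then (1 : ℝ) else 0) / d k + 1 / (2 - D)) * U k * Uc i m)
          = -(if i ∈ I then (1 : ℝ) else 0)) ∧
    (∑ k, ∑ m, ((if k = m then (1 : ℝ) else 0) / d k + 1 / (2 - D)) * U k * UΛ m)
      = (∑ i ∈ I, d i) / (2 - D) := by
  have h2D : (2 - D) ≠ 0 := by intro h; apply hD2; linarith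
  have key : ∀ V : Fin n → ℝ,
      (∑ k, ∑ m, ((if k = m then (1:ℝ) else 0) / d k + 1/(2-D)) * U k * V m)
        = (∑ k, U k * V k / d k) + (1/(2-D)) * (∑ k, U k) * (∑ m, V m) := by
    intro V
    have h1 : ∀ k : Fin n, (∑ m, ((if k = m then (1:ℝ) else 0) / d k + 1/(2-D)) * U k * V m)
        = U k * V k / d k + (1/(2-D)) * U k * (∑ m, V m) := by
      intro k
      simp only [add_mul, Finset.sum_add_distrib]
      congr 1
      · rw [Finset.sum_eq_single k]
        · rw [if_pos rfl]; ring
        · intro m _ hm; simp [Ne.symm hm]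
        · simp
      · rw [Finset.mul_sum]
    rw [Finset.sum_congr rfl (fun k _ => h1 k), Finset.sum_add_distrib]
    congr 1
    rw [mul_assoc, Finset.sum_mul, Finset.mul_sum]
    exact Finset.sum_congr rfl fun k _ => by ring
  have hsU : (∑ k, U k) = ∑ i ∈ I, d i := by
    simp [hU, Finset.sum_ite_mem, Finset.univ_inter]
  have hsUI : ∀ V : Fin n → ℝ, (∑ k, U k * V k / d k) = ∑ k ∈ I, V k := by
    intro V
    have h : ∀ k : Fin n, U k * V k / d k = if k ∈ I then V k else 0 := by
      intro k
      rw [hU k]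
      by_cases hk : k ∈ I
      · rw [if_pos hk, if_pos hk, mul_comm, mul_div_assoc, div_self (hd k).ne', mul_one]
      · simp [hk]
    rw [Finset.sum_congr rfl fun k _ => h k]
    simp [Finset.sum_ite_mem, Finset.univ_inter]
  constructor
  · intro i
    rw [key (Uc i), hsUI (Uc i)]
    have hsc : (∑ m, Uc i m) = D - 2 := by
      simp only [hUc]
      rw [Finset.sum_add_distrib]
      simp [hD]
      ring
    have hIc : (∑ k ∈ I, Uc i k) = -(if i ∈ I then (1:ℝ) else 0) + ∑ k ∈ I, d k := by
      simp only [hUc]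
      rw [Finset.sum_add_distrib]
      congr 1
      rw [Finset.sum_neg_distrib]
      congr 1
      by_cases hi : i ∈ I
      · rw [Finset.sum_eq_single i]
        · simp [hi]
        · intro m _ hm; simp [Ne.symm hm]
        · simp [hi]
      · rw [Finset.sum_eq_zero]
        · simp [hi]
        · intro m hm
          have : i ≠ m := by rintro rfl; exact hi hm
          simp [this]
    rw [hIc, hsU, hsc]
    by_cases hi : i ∈ I <;> simp [hi] <;> field_simp <;> ring
  · rw [key UΛ, hsUI UΛ]
    have hsΛ : (∑ m, UΛ m) = D - 1 := by simp [hUΛ, hD]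
    have h : (∑ k ∈ I, UΛ k) = ∑ k ∈ I, d k := by
      exact Finset.sum_congr rfl fun k _ => hUΛ k
    rw [h, hsU, hsΛ]
    field_simp
    ring
end

section
/- Let d_0 ≥ 1 and let Ω ⊆ ℝ^{d_0} be open. Let V = ℝ^N with a symmetric bilinear form ⟨·,·⟩, let S be a nonempty finite set partitioned as S = S_1 ⊔ ⋯ ⊔ S_k, and let u_s ∈ V, ε_s ∈ {−1,+1}, ν_s ∈ ℝ satisfy ⟨u_s, u_{s'}⟩ = 0 for s, s' in different blocks and Σ_{s'} ⟨u_s, u_{s'}⟩ ε_{s'} ν_{s'}² = −1 for all s. Let H_s : Ω → (0,∞) be twice continuously differentiable harmonic functions (Σ_{μ=1}^{d_0} ∂_μ∂_μ H_s = 0 on Ω) with H_s = H_{s'} whenever s, s' lie in the same block. Define σ : Ω → V by σ = Σ_s ε_s ν_s² (ln H_s) u_s and Φ^s = ν_s / H_s. Then on Ω: (i) Σ_μ ∂_μ ( e^{−2⟨u_s, σ⟩} ∂_μ Φ^s ) = 0 for every s ∈ S; (ii) Σ_μ ∂_μ∂_μ σ + Σ_s ε_s e^{−2⟨u_s, σ⟩}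 |∇Φ^s|² u_s = 0 (as a V-valued identity); (iii) ⟨∂_μ σ, ∂_ν σ⟩ + Σ_s ε_s e^{−2⟨u_s, σ⟩} ∂_μ Φ^s ∂_ν Φ^s = 0 for all μ, ν ∈ {1,…,d_0}. -/
open scoped BigOperators

/-!
Block orthogonality together with `Σ_{s'} ⟨u_s, u_{s'}⟩ ε_{s'} ν_{s'}² = -1` gives
`⟨u_s, Σ_{s'} ε_{s'} ν_{s'}² F_{s'} u_{s'}⟩ = -F_s` for every `F` constant on blocks. Applied to
`F = ln H` and `F = ∂_μ ln H` it yields `e^{-2⟨u_s, σ⟩} = H_s²` and `⟨u_s, ∂_μ σ⟩ = -∂_μ ln H_s`.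
Hence `e^{-2⟨u_s, σ⟩} ∂_μ Φ^s = -ν_s ∂_μ H_s`, so (i) is `ν_s ΔH_s = 0`, while (ii) and (iii)
reduce, coefficient by coefficient along `u_s`, to `Δ ln H = -|∇ ln H|²` for harmonic `H > 0`
and to `e^{-2⟨u_s, σ⟩} ∂_μ Φ^s ∂_ν Φ^s = ν_s² ∂_μ ln H_s ∂_ν ln H_s`.
-/

/-- Partial derivative `∂_μ f` of a scalar field on `ℝ^{d_0}`. -/
noncomputable def pd {d0 : ℕ} (f : (Fin d0 → ℝ) → ℝ) (μ : Fin d0)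
    (x : Fin d0 → ℝ) : ℝ :=
  fderiv ℝ f x (Pi.single μ 1)

/-- Partial derivative `∂_μ f` of a vector-valued field on `ℝ^{d_0}`. -/
noncomputable def pdV {d0 N : ℕ} (f : (Fin d0 → ℝ) → (Fin N → ℝ)) (μ : Fin d0)
    (x : Fin d0 → ℝ) : Fin N → ℝ :=
  fderiv ℝ f x (Pi.single μ 1)

open Filter Topology

section PartialDerivative

variable {d0 : ℕ} {Ω : Set (Fin d0 → ℝ)} {f g : (Fin d0 → ℝ) → ℝ} {x : Fin d0 → ℝ} {μ : Fin d0}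

theorem HasFDerivAt.pd_eq {f' : (Fin d0 → ℝ) →L[ℝ] ℝ} (hf : HasFDerivAt f f' x) :
    pd f μ x = f' (Pi.single μ 1) := by
  rw [pd, hf.fderiv]

theorem pd_congr_of_eventuallyEq (h : f =ᶠ[𝓝 x] g) : pd f μ x = pd g μ x := by
  rw [pd, pd, h.fderiv_eq]

theorem pdV_congr_of_eventuallyEq {N : ℕ} {F G : (Fin d0 → ℝ) → Fin N → ℝ}
    (h : F =ᶠ[𝓝 x] G) : pdV F μ x = pdV G μ x := by
  rw [pdV, pdV, h.fderiv_eq]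

theorem pd_const_mul (hf : DifferentiableAt ℝ f x) (c : ℝ) :
    pd (fun y => c * f y) μ x = c * pd f μ x := by
  rw [(hf.hasFDerivAt.const_mul c).pd_eq]
  simp [pd]

theorem pd_div (hg : DifferentiableAt ℝ g x) (hf : DifferentiableAt ℝ f x) (hx : f x ≠ 0) :
    pd (fun y => g y / f y) μ x = (pd g μ x * f x - g x * pd f μ x) / f x ^ 2 := by
  have hinv : HasFDerivAt (fun y => (f y)⁻¹)
      ((fderiv ℝ f x).smulRight (-(f x ^ 2)⁻¹)) x :=
    (hasFDerivAt_inv hx).comp x hf.hasFDerivAt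
  simp only [div_eq_mul_inv]
  rw [(hg.hasFDerivAt.fun_mul hinv).pd_eq]
  simp only [add_apply, smul_apply, ContinuousLinearMap.smulRight_apply, smul_eq_mul, mul_neg,
    pd]
  field_simp
  ring

theorem pd_const_div (hf : DifferentiableAt ℝ f x) (hx : f x ≠ 0) (c : ℝ) :
    pd (fun y => c / f y) μ x = -c * pd f μ x / f x ^ 2 := by
  rw [pd_div (differentiableAt_const c) hf hx]
  simp [pd]

theorem pd_log (hf : DifferentiableAt ℝ f x) (hx : f x ≠ 0) :
    pd (fun y => Real.log (f y)) μ x = pd f μ x / f x := by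
  rw [(hf.hasFDerivAt.log hx).pd_eq]
  simp [pd, div_eq_inv_mul]

theorem sq_mul_pd_const_div_mul_pd_const_div (hf : DifferentiableAt ℝ f x) (hx : f x ≠ 0)
    (c : ℝ) (μ₁ μ₂ : Fin d0) :
    f x ^ 2 * pd (fun y => c / f y) μ₁ x * pd (fun y => c / f y) μ₂ x
      = c ^ 2 * pd (fun y => Real.log (f y)) μ₁ x * pd (fun y => Real.log (f y)) μ₂ x := by
  rw [pd_const_div hf hx, pd_const_div hf hx, pd_log hf hx, pd_log hf hx]
  field_simp

theorem ContDiffOn.differentiableAt_pd (hf : ContDiffOn ℝ 2 f Ω) (hΩ : IsOpen Ω) (hx : x ∈ Ω) :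
    DifferentiableAt ℝ (pd f μ) x := by
  have h1 : ContDiffAt ℝ 1 (fderiv ℝ f) x :=
    (hf.contDiffAt (hΩ.mem_nhds hx)).fderiv_right (by norm_num)
  exact (h1.differentiableAt one_ne_zero).clm_apply (differentiableAt_const _)

theorem pd_pd_log (hf : ContDiffOn ℝ 2 f Ω) (hΩ : IsOpen Ω) (hne : ∀ y ∈ Ω, f y ≠ 0)
    (hx : x ∈ Ω) :
    pd (pd (fun y => Real.log (f y)) μ) μ x
      = pd (pd f μ) μ x / f x - pd (fun y => Real.log (f y)) μ x ^ 2 := by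
  have hdiff : ∀ y ∈ Ω, DifferentiableAt ℝ f y := fun y hy =>
    (hf.differentiableOn two_ne_zero).differentiableAt (hΩ.mem_nhds hy)
  have hloc : pd (fun y => Real.log (f y)) μ =ᶠ[𝓝 x] fun y => pd f μ y / f y := by
    filter_upwards [hΩ.mem_nhds hx] with y hy using pd_log (hdiff y hy) (hne y hy)
  rw [pd_congr_of_eventuallyEq hloc, hloc.eq_of_nhds,
    pd_div (hf.differentiableAt_pd hΩ hx) (hdiff x hx) (hne x hx)]
  field_simp

theorem laplacian_log_of_harmonic (hf : ContDiffOn ℝ 2 f Ω) (hΩ : IsOpen Ω)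
    (hne : ∀ y ∈ Ω, f y ≠ 0) (hx : x ∈ Ω) (hharm : ∑ μ, pd (pd f μ) μ x = 0) :
    ∑ μ, pd (pd (fun y => Real.log (f y)) μ) μ x
      = -∑ μ, pd (fun y => Real.log (f y)) μ x ^ 2 := by
  simp only [pd_pd_log hf hΩ hne hx, Finset.sum_sub_distrib, ← Finset.sum_div, hharm,
    zero_div, zero_sub]

theorem sq_mul_laplacian_log_add_sq_mul_sum_sq_pd_const_div (hf : ContDiffOn ℝ 2 f Ω)
    (hΩ : IsOpen Ω) (hne : ∀ y ∈ Ω, f y ≠ 0) (hx : x ∈ Ω) (hharm : ∑ μ, pd (pd f μ) μ x = 0)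
    (c : ℝ) :
    c ^ 2 * ∑ μ, pd (pd (fun y => Real.log (f y)) μ) μ x
      + f x ^ 2 * ∑ μ, pd (fun y => c / f y) μ x ^ 2 = 0 := by
  have hdiff : DifferentiableAt ℝ f x := (hf.differentiableOn two_ne_zero).differentiableAt
    (hΩ.mem_nhds hx)
  have hμ : ∀ μ, f x ^ 2 * pd (fun y => c / f y) μ x ^ 2
      = c ^ 2 * pd (fun y => Real.log (f y)) μ x ^ 2 := fun μ => by
    linear_combination sq_mul_pd_const_div_mul_pd_const_div hdiff (hne x hx) c μ μ
  rw [laplacian_log_of_harmonic hf hΩ hne hx hharm, Finset.mul_sum,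
    Finset.sum_congr rfl fun μ _ => hμ μ, ← Finset.mul_sum]
  ring

theorem sum_pd_eq_zero_of_eqOn_const_mul_pd (hf : ContDiffOn ℝ 2 f Ω) (hΩ : IsOpen Ω)
    (hx : x ∈ Ω) (hharm : ∑ μ, pd (pd f μ) μ x = 0) {j : Fin d0 → (Fin d0 → ℝ) → ℝ} {c : ℝ}
    (hj : ∀ μ, ∀ y ∈ Ω, j μ y = c * pd f μ y) :
    ∑ μ, pd (j μ) μ x = 0 := by
  have hloc : ∀ μ, j μ =ᶠ[𝓝 x] fun y => c * pd f μ y := fun μ =>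
    eventually_of_mem (hΩ.mem_nhds hx) (hj μ)
  simp only [pd_congr_of_eventuallyEq (hloc _), pd_const_mul (hf.differentiableAt_pd hΩ hx),
    ← Finset.mul_sum, hharm, mul_zero]

variable {N : ℕ} {S : Type*} [Fintype S] {ψ : S → (Fin d0 → ℝ) → ℝ}

theorem pdV_sum_mul_smul (hψ : ∀ s, DifferentiableAt ℝ (ψ s) x) (a : S → ℝ)
    (v : S → Fin N → ℝ) :
    pdV (fun y => ∑ s, (a s * ψ s y) • v s) μ x = ∑ s, (a s * pd (ψ s) μ x) • v s := by
  have hd := HasFDerivAt.fun_sum (u := Finset.univ)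
    fun s _ => (((hψ s).hasFDerivAt.const_mul (a s)).smul_const (v s))
  rw [pdV, hd.fderiv]
  simp [pd]

theorem sum_pdV_pdV_sum_mul_smul (hψ : ∀ s, ContDiffOn ℝ 2 (ψ s) Ω) (hΩ : IsOpen Ω)
    (hx : x ∈ Ω) (a : S → ℝ) (v : S → Fin N → ℝ) :
    ∑ μ, pdV (fun y => pdV (fun z => ∑ s, (a s * ψ s z) • v s) μ y) μ x
      = ∑ s, (a s * ∑ μ, pd (pd (ψ s) μ) μ x) • v s := by
  have hdiff : ∀ s, ∀ y ∈ Ω, DifferentiableAt ℝ (ψ s) y := fun s y hy =>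
    ((hψ s).differentiableOn two_ne_zero).differentiableAt (hΩ.mem_nhds hy)
  have hloc : ∀ μ, (fun y => pdV (fun z => ∑ s, (a s * ψ s z) • v s) μ y)
      =ᶠ[𝓝 x] fun y => ∑ s, (a s * pd (ψ s) μ y) • v s := fun μ => by
    filter_upwards [hΩ.mem_nhds hx] with y hy
    exact pdV_sum_mul_smul (fun s => hdiff s y hy) a v
  simp only [pdV_congr_of_eventuallyEq (hloc _),
    pdV_sum_mul_smul (fun s => (hψ s).differentiableAt_pd hΩ hx), Finset.mul_sum,
    Finset.sum_smul]
  exact Finset.sum_comm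

end PartialDerivative

theorem LinearMap.BilinForm.apply_sum_smul_of_blockOrthogonal {V ι S : Type*}
    [AddCommGroup V] [Module ℝ V] [Fintype S] (B : LinearMap.BilinForm ℝ V) (p : S → ι)
    (u : S → V) (ε ν : S → ℝ) {s : S} (horth : ∀ s', p s ≠ p s' → B (u s) (u s') = 0)
    (hrel : ∑ s', B (u s) (u s') * ε s' * ν s' ^ 2 = -1)
    {F : S → ℝ} (hF : ∀ s', p s = p s' → F s' = F s) :
    B (u s) (∑ s', (ε s' * ν s' ^ 2 * F s') • u s') = -F s := by
  have hterm : ∀ s', B (u s) ((ε s' * ν s' ^ 2 * F s') • u s')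
      = B (u s) (u s') * ε s' * ν s' ^ 2 * F s := by
    intro s'
    by_cases hps : p s = p s'
    · rw [map_smul, smul_eq_mul, hF s' hps]; ring
    · rw [map_smul, smul_eq_mul, horth s' hps]; ring
  simp only [map_sum, hterm, ← Finset.sum_mul, hrel, neg_one_mul]

theorem stmt16_general (d0 N : ℕ)
    (Ω : Set (Fin d0 → ℝ)) (hΩ : IsOpen Ω)
    (B : LinearMap.BilinForm ℝ (Fin N → ℝ))
    (S : Type) [Fintype S]
    (k : ℕ) (p : S → Fin k)
    (u : S → (Fin N → ℝ)) (ε : S → ℝ) (ν : S → ℝ)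
    (horth : ∀ s s', p s ≠ p s' → B (u s) (u s') = 0)
    (hrel : ∀ s, ∑ s', B (u s) (u s') * ε s' * (ν s') ^ 2 = -1)
    (H : S → (Fin d0 → ℝ) → ℝ)
    (hHpos : ∀ s, ∀ x ∈ Ω, 0 < H s x)
    (hHC2 : ∀ s, ContDiffOn ℝ 2 (H s) Ω)
    (hHharm : ∀ s, ∀ x ∈ Ω, ∑ μ, pd (pd (H s) μ) μ x = 0)
    (hHblock : ∀ s s', p s = p s' → H s = H s')
    (σ : (Fin d0 → ℝ) → (Fin N → ℝ))
    (hσ : ∀ x, σ x = ∑ s, (ε s * (ν s) ^ 2 * Real.log (H s x)) • u s)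
    (Φ : S → (Fin d0 → ℝ) → ℝ)
    (hΦ : ∀ s x, Φ s x = ν s / H s x) :
    (∀ s, ∀ x ∈ Ω,
      ∑ μ, pd (fun y => Real.exp (-2 * B (u s) (σ y)) * pd (Φ s) μ y) μ x = 0) ∧
    (∀ x ∈ Ω,
      (∑ μ, pdV (fun y => pdV σ μ y) μ x)
        + ∑ s, (ε s * Real.exp (-2 * B (u s) (σ x))
            * ∑ μ, (pd (Φ s) μ x) ^ 2) • u s = 0) ∧
    (∀ x ∈ Ω, ∀ μ₁ μ₂ : Fin d0,
      B (pdV σ μ₁ x) (pdV σ μ₂ x)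
        + ∑ s, ε s * Real.exp (-2 * B (u s) (σ x))
            * pd (Φ s) μ₁ x * pd (Φ s) μ₂ x = 0) := by
  obtain rfl : Φ = fun s y => ν s / H s y := funext₂ hΦ
  beta_reduce
  have hne : ∀ s, ∀ y ∈ Ω, H s y ≠ 0 := fun s y hy => (hHpos s y hy).ne'
  have hdiff : ∀ s, ∀ y ∈ Ω, DifferentiableAt ℝ (H s) y := fun s y hy =>
    ((hHC2 s).differentiableOn two_ne_zero).differentiableAt (hΩ.mem_nhds hy)
  have hψ : ∀ s, ContDiffOn ℝ 2 (fun y => Real.log (H s y)) Ω := fun s => (hHC2 s).log (hne s)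
  -- every quantity built from `H s` alone is constant on the block of `s`
  have hcollapse : ∀ s (G : ((Fin d0 → ℝ) → ℝ) → ℝ),
      B (u s) (∑ s', (ε s' * ν s' ^ 2 * G (H s')) • u s') = -G (H s) := fun s G =>
    B.apply_sum_smul_of_blockOrthogonal p u ε ν (horth s) (hrel s) fun s' h => by
      rw [hHblock s s' h]
  have hexp : ∀ y ∈ Ω, ∀ s, Real.exp (-2 * B (u s) (σ y)) = H s y ^ 2 := by
    intro y hy s
    rw [hσ, hcollapse s fun h => Real.log (h y), mul_neg, neg_mul, neg_neg, mul_comm, Real.exp_mul,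
      Real.exp_log (hHpos s y hy)]
    norm_cast
  refine ⟨fun s x hx => ?_, fun x hx => ?_, fun x hx μ₁ μ₂ => ?_⟩
  · refine sum_pd_eq_zero_of_eqOn_const_mul_pd (hHC2 s) hΩ hx (hHharm s x hx)
      (c := -ν s) fun μ y hy => ?_
    rw [hexp y hy s, pd_const_div (hdiff s y hy) (hne s y hy)]
    field_simp [hne s y hy]
  · simp only [hexp x hx]
    rw [funext hσ, sum_pdV_pdV_sum_mul_smul hψ hΩ hx, ← Finset.sum_add_distrib]
    refine Finset.sum_eq_zero fun s _ => ?_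
    rw [← add_smul]
    refine smul_eq_zero_of_left ?_ _
    linear_combination ε s * sq_mul_laplacian_log_add_sq_mul_sum_sq_pd_const_div (hHC2 s) hΩ
      (hne s) hx (hHharm s x hx) (ν s)
  · simp only [hexp x hx]
    rw [funext hσ, pdV_sum_mul_smul (fun s => (hdiff s x hx).log (hne s x hx)), map_sum,
      LinearMap.sum_apply, ← Finset.sum_add_distrib]
    refine Finset.sum_eq_zero fun s _ => ?_
    rw [map_smul, LinearMap.smul_apply, smul_eq_mul,
      pdV_sum_mul_smul (fun s => (hdiff s x hx).log (hne s x hx)),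
      hcollapse s fun h => pd (fun z => Real.log (h z)) μ₂ x]
    linear_combination
      ε s * sq_mul_pd_const_div_mul_pd_const_div (hdiff s x hx) (hne s x hx) (ν s) μ₁ μ₂

/-- Proposition 1 on a flat base: the configuration
`σ = Σ_s ε_s ν_s² (ln H_s) u_s`, `Φ^s = ν_s/H_s` built from block-orthogonal brane
vectors satisfying `Σ_{s'} ⟨u_s,u_{s'}⟩ ε_{s'} ν_{s'}² = −1` and harmonic functions
`H_s` coinciding inside blocks satisfies the sigma-model field equations:
(i) `Σ_μ ∂_μ(e^{−2⟨u_s,σ⟩} ∂_μ Φ^s) = 0`;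
(ii) `Σ_μ ∂_μ∂_μ σ + Σ_s ε_s e^{−2⟨u_s,σ⟩} |∇Φ^s|² u_s = 0`;
(iii) `⟨∂_μ σ, ∂_ν σ⟩ + Σ_s ε_s e^{−2⟨u_s,σ⟩} ∂_μ Φ^s ∂_ν Φ^s = 0`. -/
theorem stmt16 (d0 N : ℕ) (hd0 : 1 ≤ d0)
    (Ω : Set (Fin d0 → ℝ)) (hΩ : IsOpen Ω)
    (B : LinearMap.BilinForm ℝ (Fin N → ℝ)) (hBsymm : ∀ x y, B x y = B y x)
    (S : Type) [Fintype S] [Nonempty S]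
    (k : ℕ) (p : S → Fin k) (hp : Function.Surjective p)
    (u : S → (Fin N → ℝ)) (ε : S → ℝ) (hε : ∀ s, ε s = 1 ∨ ε s = -1) (ν : S → ℝ)
    (horth : ∀ s s', p s ≠ p s' → B (u s) (u s') = 0)
    (hrel : ∀ s, ∑ s', B (u s) (u s') * ε s' * (ν s') ^ 2 = -1)
    (H : S → (Fin d0 → ℝ) → ℝ)
    (hHpos : ∀ s, ∀ x ∈ Ω, 0 < H s x)
    (hHC2 : ∀ s, ContDiffOn ℝ 2 (H s) Ω)
    (hHharm : ∀ s, ∀ x ∈ Ω, ∑ μ, pd (pd (H s) μ) μ x = 0)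
    (hHblock : ∀ s s', p s = p s' → H s = H s')
    (σ : (Fin d0 → ℝ) → (Fin N → ℝ))
    (hσ : ∀ x, σ x = ∑ s, (ε s * (ν s) ^ 2 * Real.log (H s x)) • u s)
    (Φ : S → (Fin d0 → ℝ) → ℝ)
    (hΦ : ∀ s x, Φ s x = ν s / H s x) :
    (∀ s, ∀ x ∈ Ω,
      ∑ μ, pd (fun y => Real.exp (-2 * B (u s) (σ y)) * pd (Φ s) μ y) μ x = 0) ∧
    (∀ x ∈ Ω,
      (∑ μ, pdV (fun y => pdV σ μ y) μ x)
        + ∑ s, (ε s * Real.exp (-2 * B (u s) (σ x))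
            * ∑ μ, (pd (Φ s) μ x) ^ 2) • u s = 0) ∧
    (∀ x ∈ Ω, ∀ μ₁ μ₂ : Fin d0,
      B (pdV σ μ₁ x) (pdV σ μ₂ x)
        + ∑ s, ε s * Real.exp (-2 * B (u s) (σ x))
            * pd (Φ s) μ₁ x * pd (Φ s) μ₂ x = 0) :=
  stmt16_general d0 N Ω hΩ B S k p u ε ν horth hrel H hHpos hHC2 hHharm hHblock σ hσ Φ hΦ
end

section
/- Let S be a nonempty finite set, A = (A_{ss'}) a real S×S matrix, and b_s ≠ 0 reals with Σ_{s'} A_{ss'} b_{s'} = 2 for all s ∈ S. Let C > 0, β < 0, u_0 ∈ ℝ, and define f̄(u) = sqrt(−β/C) · sinh(√C (u − u_0)) and q^s(u) = −b_s ln f̄(u) for u > u_0. Then for all u > u_0 and all s ∈ S: (d²/du²) q^s(u) = −β b_s exp( Σ_{s'} A_{ss'} q^{s'}(u) ). Moreover, for any reals h_s (s ∈ S), the energy E_T(u) = (1/4) Σ_{s,s'} h_s A_{ss'} (q^s)'(u) (q^{s'})'(u) + (1/2) Σ_s h_s β b_s exp( Σ_{s'} A_{ss'} q^{s'}(u) )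 is constant and equal to (1/2) C Σ_s h_s b_s for all u > u_0. -/
/-!
Every `q^s` is `b_s φ` for the single function `φ = -log f̄`, and since `A b = 2` the exponent
`Σ_{s'} A_{ss'} q^{s'}` is `2φ`. So the Toda system collapses to the Liouville equation
`φ'' = -β e^{2φ}`, and the energy to `(1/2) Σ_s h_s b_s (φ'² + β e^{2φ})`. For
`f̄ = a sinh (k (u - u₀))` one has `f̄'' = k² f̄` and `f̄'² - f̄ f̄'' = a² k²`, which gives
`φ'' = a² k² e^{2φ}` and the first integral `φ'² - a² k² e^{2φ} = k²`; here `a² k² = -β`, `k² = C`.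
-/

open Real Filter Topology

noncomputable def sinhLiouville (a k u0 u : ℝ) : ℝ :=
  -log (a * sinh (k * (u - u0)))

section SinhLiouville

variable {a k u0 u β C : ℝ}

lemma exp_two_mul_sinhLiouville (hf : a * sinh (k * (u - u0)) ≠ 0) :
    exp (2 * sinhLiouville a k u0 u) = ((a * sinh (k * (u - u0))) ^ 2)⁻¹ := by
  rw [sinhLiouville, mul_neg, ← Nat.cast_ofNat, ← log_pow, exp_neg, exp_log (sq_pos_of_ne_zero hf)]

lemma hasDerivAt_mul_sub (k u0 u : ℝ) : HasDerivAt (fun v => k * (v - u0)) k u := by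
  simpa using ((hasDerivAt_id u).sub_const u0).const_mul k

lemma hasDerivAt_sinhLiouville (hf : a * sinh (k * (u - u0)) ≠ 0) :
    HasDerivAt (sinhLiouville a k u0) (-k * (cosh (k * (u - u0)) / sinh (k * (u - u0)))) u := by
  have hsinh := (hasDerivAt_mul_sub k u0 u).sinh.const_mul a
  refine (hsinh.log hf).neg.congr_deriv ?_
  have ha : a ≠ 0 := left_ne_zero_of_mul hf
  field_simp

lemma deriv_deriv_sinhLiouville (hf : a * sinh (k * (u - u0)) ≠ 0) :
    deriv (deriv (sinhLiouville a k u0)) u = a ^ 2 * k ^ 2 * exp (2 * sinhLiouville a k u0 u) := by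
  have hcont : ContinuousAt (fun v => a * sinh (k * (v - u0))) u := by fun_prop
  have hderiv : deriv (sinhLiouville a k u0) =ᶠ[𝓝 u]
      fun v => -k * (cosh (k * (v - u0)) / sinh (k * (v - u0))) :=
    (hcont.eventually_ne hf).mono fun v hv => (hasDerivAt_sinhLiouville hv).deriv
  have hsinh : sinh (k * (u - u0)) ≠ 0 := right_ne_zero_of_mul hf
  have hcoth : HasDerivAt (fun v => -k * (cosh (k * (v - u0)) / sinh (k * (v - u0)))) _ u :=
    ((hasDerivAt_mul_sub k u0 u).cosh.div (hasDerivAt_mul_sub k u0 u).sinh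
    hsinh).const_mul (-k)
  rw [hderiv.deriv_eq, hcoth.deriv, exp_two_mul_sinhLiouville hf]
  have ha : a ≠ 0 := left_ne_zero_of_mul hf
  field_simp
  linear_combination (k ^ 2) * cosh_sq (k * (u - u0))

lemma deriv_sinhLiouville_sq_sub (hf : a * sinh (k * (u - u0)) ≠ 0) :
    deriv (sinhLiouville a k u0) u ^ 2 - a ^ 2 * k ^ 2 * exp (2 * sinhLiouville a k u0 u) = k ^ 2 := by
  rw [(hasDerivAt_sinhLiouville hf).deriv, exp_two_mul_sinhLiouville hf]
  have ha : a ≠ 0 := left_ne_zero_of_mul hf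
  have hsinh : sinh (k * (u - u0)) ≠ 0 := right_ne_zero_of_mul hf
  field_simp
  linear_combination (k ^ 2) * cosh_sq (k * (u - u0))

lemma sqrt_mul_sinh_ne_zero (hC : 0 < C) (hβ : β < 0) (hu : u0 < u) :
    √(-β / C) * sinh (√C * (u - u0)) ≠ 0 :=
  (mul_pos (sqrt_pos.mpr (div_pos (neg_pos.mpr hβ) hC))
    (sinh_pos_iff.mpr (mul_pos (sqrt_pos.mpr hC) (sub_pos.mpr hu)))).ne'

lemma sq_sqrt_div_mul_sq_sqrt (hC : 0 < C) (hβ : β < 0) :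
    √(-β / C) ^ 2 * √C ^ 2 = -β := by
  rw [sq_sqrt (div_pos (neg_pos.mpr hβ) hC).le, sq_sqrt hC.le]
  field_simp

lemma deriv_deriv_sinhLiouville_sqrt (hC : 0 < C) (hβ : β < 0) (hu : u0 < u) :
    deriv (deriv (sinhLiouville √(-β / C) √C u0)) u
      = -β * exp (2 * sinhLiouville √(-β / C) √C u0 u) := by
  rw [deriv_deriv_sinhLiouville (sqrt_mul_sinh_ne_zero hC hβ hu), sq_sqrt_div_mul_sq_sqrt hC hβ]

lemma deriv_sinhLiouville_sqrt_sq_add (hC : 0 < C) (hβ : β < 0) (hu : u0 < u) :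
    deriv (sinhLiouville √(-β / C) √C u0) u ^ 2
      + β * exp (2 * sinhLiouville √(-β / C) √C u0 u) = C := by
  have h := deriv_sinhLiouville_sq_sub (sqrt_mul_sinh_ne_zero hC hβ hu)
  rw [sq_sqrt_div_mul_sq_sqrt hC hβ, sq_sqrt hC.le] at h
  linear_combination h

end SinhLiouville

section CartanSum

variable {S : Type} [Fintype S] {A : Matrix S S ℝ} {b : S → ℝ}

lemma sum_mul_mul_eq_two_mul (hb : ∀ s, ∑ s', A s s' * b s' = 2) (s : S) (x : ℝ) :
    ∑ s', A s s' * (b s' * x) = 2 * x := by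
  simp only [← mul_assoc, ← Finset.sum_mul, hb]

lemma sum_sum_mul_mul_eq_two_mul_sq (hb : ∀ s, ∑ s', A s s' * b s' = 2) (h : S → ℝ) (x : ℝ) :
    ∑ s, ∑ s', h s * A s s' * (b s * x) * (b s' * x) = 2 * x ^ 2 * ∑ s, h s * b s := by
  calc ∑ s, ∑ s', h s * A s s' * (b s * x) * (b s' * x)
      = ∑ s, h s * b s * x * ∑ s', A s s' * (b s' * x) := by
        simp only [Finset.mul_sum]
        exact Finset.sum_congr rfl fun s _ => Finset.sum_congr rfl fun s' _ => by ring
    _ = 2 * x ^ 2 * ∑ s, h s * b s := by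
        simp only [sum_mul_mul_eq_two_mul hb, Finset.mul_sum]
        exact Finset.sum_congr rfl fun s _ => by ring

end CartanSum

theorem stmt17_general (S : Type) [Fintype S]
    (A : Matrix S S ℝ) (b : S → ℝ)
    (hb : ∀ s, ∑ s', A s s' * b s' = 2)
    (C : ℝ) (hC : 0 < C) (β : ℝ) (hβ : β < 0) (u0 : ℝ)
    (fbar : ℝ → ℝ)
    (hfbar : ∀ u, fbar u = Real.sqrt (-β / C) * Real.sinh (Real.sqrt C * (u - u0)))
    (q : S → ℝ → ℝ)
    (hq : ∀ s u, q s u = -(b s) * Real.log (fbar u)) :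
    (∀ u, u0 < u → ∀ s,
      deriv (deriv (q s)) u = -β * b s * Real.exp (∑ s', A s s' * q s' u)) ∧
    (∀ h : S → ℝ, ∀ u, u0 < u →
      (1 / 4) * (∑ s, ∑ s', h s * A s s' * deriv (q s) u * deriv (q s') u)
        + (1 / 2) * (∑ s, h s * β * b s * Real.exp (∑ s', A s s' * q s' u))
      = (1 / 2) * C * ∑ s, h s * b s) := by
  set φ := sinhLiouville √(-β / C) √C u0
  have hqφ : ∀ s, q s = fun u => b s * φ u := fun s => funext fun u => by
    rw [hq, hfbar, neg_mul, ← mul_neg]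
    rfl
  have hAq : ∀ s u, ∑ s', A s s' * q s' u = 2 * φ u := fun s u => by
    simp only [hqφ, sum_mul_mul_eq_two_mul hb]
  refine ⟨fun u hu s => ?_, fun h u hu => ?_⟩
  · rw [hAq, hqφ]
    simp only [deriv_const_mul_field']
    linear_combination b s * deriv_deriv_sinhLiouville_sqrt hC hβ hu
  · have hpot : ∑ s, h s * β * b s * exp (2 * φ u) = β * exp (2 * φ u) * ∑ s, h s * b s := by
      rw [Finset.mul_sum]
      exact Finset.sum_congr rfl fun s _ => by ring
    simp only [hAq, hpot]
    simp only [hqφ, deriv_const_mul_field', sum_sum_mul_mul_eq_two_mul_sq hb]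
    linear_combination (1 / 2 * ∑ s, h s * b s) * deriv_sinhLiouville_sqrt_sq_add hC hβ hu

/-- The one-block sinh-type solution `q^s(u) = −b_s ln f̄(u)` with
`f̄(u) = √(−β/C) sinh(√C (u − u_0))` solves the Toda-like equations
`q̈^s = −β b_s exp(Σ_{s'} A_{ss'} q^{s'})` (where `Σ_{s'} A_{ss'} b_{s'} = 2`),
and the corresponding energy is constant, equal to `(1/2) C Σ_s h_s b_s`. -/
theorem stmt17 (S : Type) [Fintype S] [Nonempty S]
    (A : Matrix S S ℝ) (b : S → ℝ) (hbne : ∀ s, b s ≠ 0)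
    (hb : ∀ s, ∑ s', A s s' * b s' = 2)
    (C : ℝ) (hC : 0 < C) (β : ℝ) (hβ : β < 0) (u0 : ℝ)
    (fbar : ℝ → ℝ)
    (hfbar : ∀ u, fbar u = Real.sqrt (-β / C) * Real.sinh (Real.sqrt C * (u - u0)))
    (q : S → ℝ → ℝ)
    (hq : ∀ s u, q s u = -(b s) * Real.log (fbar u)) :
    (∀ u, u0 < u → ∀ s,
      deriv (deriv (q s)) u = -β * b s * Real.exp (∑ s', A s s' * q s' u)) ∧
    (∀ h : S → ℝ, ∀ u, u0 < u →
      (1 / 4) * (∑ s, ∑ s', h s * A s s' * deriv (q s) u * deriv (q s') u)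
        + (1 / 2) * (∑ s, h s * β * b s * Real.exp (∑ s', A s s' * q s' u))
      = (1 / 2) * C * ∑ s, h s * b s) :=
  stmt17_general S A b hb C hC β hβ u0 fbar hfbar q hq
end

section
/- Let μ > 0 and let B̄, P be real numbers with B̄ ≠ 0, P(P + 2μ) = −B̄, and P > −2μ. Define H(z) = 1 + P z. Then H(z) > 0 for all z ∈ [0, (2μ)^{-1}], H(0) = 1, and for all z ∈ (0, (2μ)^{-1}): d/dz ( (1 − 2μ z) · H'(z)/H(z) ) = B̄ · H(z)^{−2}. -/
/-
On `[0, (2μ)⁻¹]` one has `1 + P z = (1 - 2μ z) + (P + 2μ) z`, a sum of two nonnegative terms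
that never vanish together, so `H` is positive there. For the master equation, `H' = P`, and
`d/dz ((1 - 2μ z) P / (1 + P z)) = -P (P + 2μ) / (1 + P z)²`, which is `B̄ / H²` exactly by the
relation `P (P + 2μ) = -B̄`.
-/

theorem one_add_mul_pos_of_mem_Icc {μ P z : ℝ} (hμ : 0 < μ) (hP : -2 * μ < P)
    (hz : z ∈ Set.Icc (0 : ℝ) (2 * μ)⁻¹) : 0 < 1 + P * z := by
  obtain ⟨hz₀, hz₁⟩ := hz
  have hμz : 2 * μ * z ≤ 1 :=
    calc 2 * μ * z ≤ 2 * μ * (2 * μ)⁻¹ := by gcongr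
      _ = 1 := mul_inv_cancel₀ (by positivity)
  rcases hz₀.eq_or_lt with rfl | hz₀
  · norm_num
  · rw [show 1 + P * z = (1 - 2 * μ * z) + (P + 2 * μ) * z by ring]
    nlinarith

theorem deriv_one_add_mul (P : ℝ) : deriv (fun z : ℝ => 1 + P * z) = fun _ => P :=
  funext fun z => by simp

theorem hasDerivAt_one_sub_mul_mul_div_one_add_mul (μ P : ℝ) {z : ℝ} (hz : 1 + P * z ≠ 0) :
    HasDerivAt (fun w => (1 - 2 * μ * w) * (P / (1 + P * w)))
      (-(P * (P + 2 * μ)) / (1 + P * z) ^ 2) z := by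
  have hfactor : HasDerivAt (fun w : ℝ => 1 - 2 * μ * w) (-(2 * μ)) z := by
    simpa using ((hasDerivAt_id z).const_mul (2 * μ)).const_sub 1
  have hquot : HasDerivAt (fun w : ℝ => P / (1 + P * w)) (-(P * P) / (1 + P * z) ^ 2) z := by
    simpa using (hasDerivAt_const z P).fun_div (((hasDerivAt_id z).const_mul P).const_add 1) hz
  refine (hfactor.fun_mul hquot).congr_deriv ?_
  field_simp
  ring

theorem stmt18_general (μ Bbar P : ℝ) (hμ : 0 < μ)
    (hP : P * (P + 2 * μ) = -Bbar) (hPgt : -2 * μ < P)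
    (H : ℝ → ℝ) (hH : ∀ z, H z = 1 + P * z) :
    (∀ z ∈ Set.Icc (0 : ℝ) (2 * μ)⁻¹, 0 < H z) ∧
    H 0 = 1 ∧
    (∀ z ∈ Set.Ioo (0 : ℝ) (2 * μ)⁻¹,
      deriv (fun w => (1 - 2 * μ * w) * (deriv H w / H w)) z = Bbar / (H z) ^ 2) := by
  obtain rfl : H = fun z => 1 + P * z := funext hH
  have hpos := fun z => one_add_mul_pos_of_mem_Icc (z := z) hμ hPgt
  refine ⟨hpos, by simp, fun z hz => ?_⟩
  have hz : 1 + P * z ≠ 0 := (hpos z (Set.Ioo_subset_Icc_self hz)).ne'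
  rw [deriv_one_add_mul, (hasDerivAt_one_sub_mul_mul_div_one_add_mul μ P hz).deriv, hP, neg_neg]

/-- The linear polynomial `H(z) = 1 + P z` with `P(P + 2μ) = −B̄`, `P > −2μ` solves the
black-brane master equation `d/dz((1 − 2μz) H'/H) = B̄ H^{−2}` (orthogonal case,
Lie algebra `A_1 ⊕ ⋯ ⊕ A_1`), is positive on `[0, (2μ)^{-1}]` and satisfies `H(0) = 1`. -/
theorem stmt18 (μ Bbar P : ℝ) (hμ : 0 < μ) (hB : Bbar ≠ 0)
    (hP : P * (P + 2 * μ) = -Bbar) (hPgt : -2 * μ < P)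
    (H : ℝ → ℝ) (hH : ∀ z, H z = 1 + P * z) :
    (∀ z ∈ Set.Icc (0 : ℝ) (2 * μ)⁻¹, 0 < H z) ∧
    H 0 = 1 ∧
    (∀ z ∈ Set.Ioo (0 : ℝ) (2 * μ)⁻¹,
      deriv (fun w => (1 - 2 * μ * w) * (deriv H w / H w)) z = Bbar / (H z) ^ 2) :=
  stmt18_general μ Bbar P hμ hP hPgt H hH
end
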